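/- Let (f_q, f_*) be jointly Gaussian with means μ_q, μ_*, variances σ_q², σ_*² > 0 and covariance σ_{q*}, and let y_* be a Bernoulli random variable with P(y_* = 1 | f_*) = Φ(f_*). Then P(f_q ≤ γ | y_* = 1) = BvN(a_*, b_q; −σ_{q*}/(σ_q√(1+σ_*²))) / Φ(a_*), where a_* = μ_*/√(1+σ_*²) and b_q = (γ−μ_q)/σ_q. -/

import Mathlib

/-!
Conditioning on `y_* = 1` weights the joint density of `(f_q, f_*)` by `Φ(f_*)`. Given `f_q`,
`f_*` is normal, and the identity `∫ Φ(a + b v) φ(v) dv = Φ(a / √(1 + b²))` integrates it out: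
as functions of `a`, both sides vanish at `-∞` and have the `N(0, 1 + b²)` density as derivative.
Over `f_q ≤ γ` this leaves `∫_{t ≤ b_q} Φ((σ_q μ_* + σ_{q*} t) / κ) φ(t) dt` with
`κ² = σ_q² (1 + σ_*²) - σ_{q*}²`, which is also what `BvN(b_q, a_*; ρ)` becomes once its other
coordinate is integrated out; over all of `f_q` the identity, applied once more, gives `Φ(a_*)`.
-/

open MeasureTheory Real

/-- Standard normal density. -/
noncomputable def stdPdf (x : ℝ) : ℝ := (Real.sqrt (2 * Real.pi))⁻¹ * Real.exp (-x ^ 2 / 2)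

/-- Standard normal CDF. -/
noncomputable def stdCdf (t : ℝ) : ℝ := ∫ s in Set.Iic t, stdPdf s

/-- Owen's T function. -/
noncomputable def owenT (h a : ℝ) : ℝ :=
  (2 * Real.pi)⁻¹ * ∫ x in (0:ℝ)..a, Real.exp (-h ^ 2 * (1 + x ^ 2) / 2) / (1 + x ^ 2)

/-- Standard bivariate normal density with correlation ρ. -/
noncomputable def bvnPdf (ρ x y : ℝ) : ℝ :=
  Real.exp (-(x ^ 2 - 2 * ρ * x * y + y ^ 2) / (2 * (1 - ρ ^ 2))) /
    (2 * Real.pi * Real.sqrt (1 - ρ ^ 2))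

/-- Standard bivariate normal CDF with correlation ρ. -/
noncomputable def bvn (u v ρ : ℝ) : ℝ :=
  ∫ p : ℝ × ℝ in Set.Iic u ×ˢ Set.Iic v, bvnPdf ρ p.1 p.2

/-- General bivariate Gaussian density with means μ₁ μ₂, std devs σ₁ σ₂, covariance σ₁₂. -/
noncomputable def biGaussPdf (μ₁ μ₂ σ₁ σ₂ σ₁₂ x y : ℝ) : ℝ :=
  Real.exp (-(σ₂ ^ 2 * (x - μ₁) ^ 2 - 2 * σ₁₂ * (x - μ₁) * (y - μ₂) + σ₁ ^ 2 * (y - μ₂) ^ 2) /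
      (2 * (σ₁ ^ 2 * σ₂ ^ 2 - σ₁₂ ^ 2))) /
    (2 * Real.pi * Real.sqrt (σ₁ ^ 2 * σ₂ ^ 2 - σ₁₂ ^ 2))

open Filter Set ProbabilityTheory Topology

lemma stdPdf_eq_gaussianPDFReal : stdPdf = gaussianPDFReal 0 1 := by
  funext x
  simp [stdPdf, gaussianPDFReal]

lemma stdPdf_nonneg (x : ℝ) : 0 ≤ stdPdf x :=
  stdPdf_eq_gaussianPDFReal ▸ gaussianPDFReal_nonneg 0 1 x

lemma stdPdf_le_inv_sqrt_two_pi (x : ℝ) : stdPdf x ≤ (√(2 * π))⁻¹ :=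
  mul_le_of_le_one_right (by positivity) (exp_le_one_iff.2 (by nlinarith [sq_nonneg x]))

@[fun_prop]
lemma continuous_stdPdf : Continuous stdPdf := by
  unfold stdPdf
  fun_prop

lemma integrable_stdPdf : Integrable stdPdf :=
  stdPdf_eq_gaussianPDFReal ▸ integrable_gaussianPDFReal 0 1

lemma integral_stdPdf : ∫ x, stdPdf x = 1 :=
  stdPdf_eq_gaussianPDFReal ▸ integral_gaussianPDFReal_eq_one 0 one_ne_zero

lemma stdCdf_eq_cdf : stdCdf = cdf (gaussianReal 0 1) := by
  funext t
  rw [cdf_eq_real, measureReal_def, gaussianReal_apply_eq_integral 0 one_ne_zero,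
    ENNReal.toReal_ofReal (setIntegral_nonneg measurableSet_Iic fun x _ =>
      gaussianPDFReal_nonneg 0 1 x), stdCdf, stdPdf_eq_gaussianPDFReal]

lemma stdCdf_nonneg (t : ℝ) : 0 ≤ stdCdf t := stdCdf_eq_cdf ▸ cdf_nonneg _ t

lemma stdCdf_le_one (t : ℝ) : stdCdf t ≤ 1 := stdCdf_eq_cdf ▸ cdf_le_one _ t

lemma tendsto_stdCdf_atBot : Tendsto stdCdf atBot (𝓝 0) :=
  stdCdf_eq_cdf ▸ tendsto_cdf_atBot _

lemma hasDerivAt_stdCdf (t : ℝ) : HasDerivAt stdCdf (stdPdf t) t := by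
  have hFTC := intervalIntegral.integral_hasDerivAt_right (a := 0) (b := t)
    integrable_stdPdf.intervalIntegrable (continuous_stdPdf.stronglyMeasurableAtFilter _ _)
    continuous_stdPdf.continuousAt
  refine (hFTC.const_add (stdCdf 0)).congr_of_eventuallyEq (Eventually.of_forall fun s => ?_)
  show stdCdf s = stdCdf 0 + ∫ x in 0..s, stdPdf x
  rw [← intervalIntegral.integral_Iic_sub_Iic integrable_stdPdf.integrableOn
    integrable_stdPdf.integrableOn, stdCdf, stdCdf, add_sub_cancel]

lemma continuous_stdCdf : Continuous stdCdf :=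
  continuous_iff_continuousAt.2 fun t => (hasDerivAt_stdCdf t).continuousAt

lemma MeasureTheory.Integrable.stdCdf_comp_mul {α : Type*} [MeasurableSpace α] {μ : Measure α}
    {f g : α → ℝ} (hf : Integrable f μ) (hg : Measurable g) :
    Integrable (fun x => stdCdf (g x) * f x) μ :=
  hf.bdd_mul (continuous_stdCdf.measurable.comp hg).aestronglyMeasurable
    (ae_of_all _ fun x => by rw [norm_of_nonneg (stdCdf_nonneg _)]; exact stdCdf_le_one _)

/-- The density of `N(m, τ²)`; unlike `gaussianPDFReal`, it takes the standard deviation `τ`. -/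
noncomputable def normalPdf (m τ x : ℝ) : ℝ := τ⁻¹ * stdPdf ((x - m) / τ)

lemma normalPdf_nonneg {τ : ℝ} (hτ : 0 ≤ τ) (m x : ℝ) : 0 ≤ normalPdf m τ x :=
  mul_nonneg (inv_nonneg.2 hτ) (stdPdf_nonneg _)

lemma integral_comp_div_mul_normalPdf (f : ℝ → ℝ) {τ : ℝ} (hτ : 0 < τ) (m : ℝ) :
    ∫ y, f ((y - m) / τ) * normalPdf m τ y = ∫ t, f t * stdPdf t := by
  set g : ℝ → ℝ := fun t => f t * stdPdf t
  calc ∫ y, f ((y - m) / τ) * normalPdf m τ y = τ⁻¹ * ∫ y, g ((y - m) / τ) := by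
        rw [← integral_const_mul]
        congr 1 with y
        simp only [g, normalPdf]
        ring
    _ = τ⁻¹ * ∫ y, g (y / τ) := by
        rw [integral_sub_right_eq_self (fun y => g (y / τ)) m]
    _ = ∫ t, g t := by
        rw [Measure.integral_comp_div, abs_of_pos hτ, smul_eq_mul, inv_mul_cancel_left₀ hτ.ne']

lemma setIntegral_Iic_comp_div_mul_normalPdf (f : ℝ → ℝ) {τ : ℝ} (hτ : 0 < τ) (m w : ℝ) :
    ∫ y in Iic w, f ((y - m) / τ) * normalPdf m τ y = ∫ t in Iic ((w - m) / τ), f t * stdPdf t := by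
  have hpre : Iic w = (fun y => (y - m) / τ) ⁻¹' Iic ((w - m) / τ) := by
    ext y
    simp [div_le_div_iff_of_pos_right hτ]
  rw [← integral_indicator measurableSet_Iic, ← integral_indicator measurableSet_Iic, hpre]
  simp_rw [indicator_mul_left]
  exact integral_comp_div_mul_normalPdf ((Iic ((w - m) / τ)).indicator f) hτ m

lemma integrable_normalPdf {τ : ℝ} (hτ : 0 < τ) (m : ℝ) : Integrable (normalPdf m τ) :=
  (((integrable_stdPdf.comp_div hτ.ne').comp_sub_right m).const_mul τ⁻¹).congr
    (ae_of_all _ fun y => by simp only [normalPdf, sub_div])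

lemma integral_normalPdf {τ : ℝ} (hτ : 0 < τ) (m : ℝ) : ∫ y, normalPdf m τ y = 1 := by
  simpa [integral_stdPdf] using integral_comp_div_mul_normalPdf (fun _ => 1) hτ m

lemma setIntegral_Iic_normalPdf {τ : ℝ} (hτ : 0 < τ) (m u : ℝ) :
    ∫ y in Iic u, normalPdf m τ y = stdCdf ((u - m) / τ) := by
  simpa [stdCdf] using setIntegral_Iic_comp_div_mul_normalPdf (fun _ => 1) hτ m u

lemma stdPdf_add_mul_mul_stdPdf (a b v : ℝ) :
    stdPdf (a + b * v) * stdPdf v =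
      normalPdf 0 √(1 + b ^ 2) a * normalPdf (-(a * b) / (1 + b ^ 2)) (√(1 + b ^ 2))⁻¹ v := by
  have hb : 0 < 1 + b ^ 2 := by positivity
  have hc2 : √(1 + b ^ 2) ^ 2 = 1 + b ^ 2 := sq_sqrt hb.le
  have hexp : -(a + b * v) ^ 2 / 2 + -v ^ 2 / 2 = -((a - 0) / √(1 + b ^ 2)) ^ 2 / 2 +
      -((v - -(a * b) / (1 + b ^ 2)) / (√(1 + b ^ 2))⁻¹) ^ 2 / 2 := by
    rw [div_pow, div_pow, inv_pow, hc2]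
    field_simp
    ring
  simp only [normalPdf, stdPdf, inv_inv]
  calc _ = (√(2 * π))⁻¹ * (√(2 * π))⁻¹ * exp (-(a + b * v) ^ 2 / 2 + -v ^ 2 / 2) := by
        rw [exp_add]; ring
    _ = _ := by
        rw [hexp, exp_add]
        field_simp

lemma integral_stdPdf_add_mul_mul_stdPdf (a b : ℝ) :
    ∫ v, stdPdf (a + b * v) * stdPdf v = normalPdf 0 √(1 + b ^ 2) a := by
  simp_rw [stdPdf_add_mul_mul_stdPdf a b]
  rw [integral_const_mul, integral_normalPdf (by positivity), mul_one]

lemma hasDerivAt_integral_stdCdf_add_mul_mul_stdPdf (b a : ℝ) :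
    HasDerivAt (fun a => ∫ v, stdCdf (a + b * v) * stdPdf v) (normalPdf 0 √(1 + b ^ 2) a) a := by
  have key := hasDerivAt_integral_of_dominated_loc_of_deriv_le (μ := volume) (x₀ := a) (s := univ)
    (F := fun a v => stdCdf (a + b * v) * stdPdf v)
    (F' := fun a v => stdPdf (a + b * v) * stdPdf v)
    (bound := fun v => (√(2 * π))⁻¹ * stdPdf v) univ_mem
    (Eventually.of_forall fun a =>
      (integrable_stdPdf.stdCdf_comp_mul (by fun_prop)).aestronglyMeasurable)
    (integrable_stdPdf.stdCdf_comp_mul (by fun_prop))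
    (by fun_prop : Continuous fun v => stdPdf (a + b * v) * stdPdf v).aestronglyMeasurable
    (ae_of_all _ fun v a _ => by
      rw [norm_of_nonneg (mul_nonneg (stdPdf_nonneg _) (stdPdf_nonneg _))]
      exact mul_le_mul_of_nonneg_right (stdPdf_le_inv_sqrt_two_pi _) (stdPdf_nonneg _))
    (integrable_stdPdf.const_mul _)
    (ae_of_all _ fun v a _ => by
      simpa using ((hasDerivAt_stdCdf _).comp a ((hasDerivAt_id a).add_const (b * v))).mul_const
        (stdPdf v))
  rw [integral_stdPdf_add_mul_mul_stdPdf] at key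
  exact key.2

lemma tendsto_integral_stdCdf_add_mul_mul_stdPdf_atBot (b : ℝ) :
    Tendsto (fun a => ∫ v, stdCdf (a + b * v) * stdPdf v) atBot (𝓝 0) := by
  have h := tendsto_integral_filter_of_dominated_convergence (μ := volume) (l := atBot)
    (F := fun a v => stdCdf (a + b * v) * stdPdf v) (f := fun _ => 0) stdPdf
    (Eventually.of_forall fun a =>
      (integrable_stdPdf.stdCdf_comp_mul (by fun_prop)).aestronglyMeasurable)
    (Eventually.of_forall fun a => ae_of_all _ fun v => by
      rw [norm_of_nonneg (mul_nonneg (stdCdf_nonneg _) (stdPdf_nonneg _))]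
      exact mul_le_of_le_one_left (stdPdf_nonneg _) (stdCdf_le_one _))
    integrable_stdPdf
    (ae_of_all _ fun v => by
      simpa using (tendsto_stdCdf_atBot.comp
        (tendsto_atBot_add_const_right _ (b * v) tendsto_id)).mul_const (stdPdf v))
  simpa using h

lemma integral_stdCdf_add_mul_mul_stdPdf (a b : ℝ) :
    ∫ v, stdCdf (a + b * v) * stdPdf v = stdCdf (a / √(1 + b ^ 2)) := by
  have hFTC := integral_Iic_of_hasDerivAt_of_tendsto' (a := a)
    (fun x _ => hasDerivAt_integral_stdCdf_add_mul_mul_stdPdf b x)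
    (integrable_normalPdf (by positivity) 0).integrableOn
    (tendsto_integral_stdCdf_add_mul_mul_stdPdf_atBot b)
  rw [setIntegral_Iic_normalPdf (by positivity), sub_zero, sub_zero] at hFTC
  exact hFTC.symm

lemma integral_stdCdf_mul_normalPdf {τ : ℝ} (hτ : 0 < τ) (m : ℝ) :
    ∫ y, stdCdf y * normalPdf m τ y = stdCdf (m / √(1 + τ ^ 2)) := by
  rw [← integral_stdCdf_add_mul_mul_stdPdf,
    ← integral_comp_div_mul_normalPdf (fun t => stdCdf (m + τ * t)) hτ m]
  congr 1 with y
  rw [mul_div_cancel₀ _ hτ.ne', add_sub_cancel]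

section Bivariate

variable {μ₁ μ₂ σ₁ σ₂ σ₁₂ : ℝ}

lemma biGaussPdf_eq_normalPdf_mul_normalPdf (hσ₁ : 0 < σ₁) (hD : σ₁₂ ^ 2 < σ₁ ^ 2 * σ₂ ^ 2)
    (x y : ℝ) :
    biGaussPdf μ₁ μ₂ σ₁ σ₂ σ₁₂ x y = normalPdf μ₁ σ₁ x *
      normalPdf (μ₂ + σ₁₂ / σ₁ ^ 2 * (x - μ₁)) (√(σ₁ ^ 2 * σ₂ ^ 2 - σ₁₂ ^ 2) / σ₁) y := by
  have hD' : 0 < σ₁ ^ 2 * σ₂ ^ 2 - σ₁₂ ^ 2 := by linarith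
  have hd2 : √(σ₁ ^ 2 * σ₂ ^ 2 - σ₁₂ ^ 2) ^ 2 = σ₁ ^ 2 * σ₂ ^ 2 - σ₁₂ ^ 2 := sq_sqrt hD'.le
  have hexp : -(σ₂ ^ 2 * (x - μ₁) ^ 2 - 2 * σ₁₂ * (x - μ₁) * (y - μ₂) + σ₁ ^ 2 * (y - μ₂) ^ 2) /
        (2 * (σ₁ ^ 2 * σ₂ ^ 2 - σ₁₂ ^ 2)) =
      -((x - μ₁) / σ₁) ^ 2 / 2 + -((y - (μ₂ + σ₁₂ / σ₁ ^ 2 * (x - μ₁))) /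
        (√(σ₁ ^ 2 * σ₂ ^ 2 - σ₁₂ ^ 2) / σ₁)) ^ 2 / 2 := by
    rw [div_pow, div_pow, div_pow, hd2]
    generalize hDdef : σ₁ ^ 2 * σ₂ ^ 2 - σ₁₂ ^ 2 = D at hD' ⊢
    field_simp
    rw [← hDdef]
    ring
  have hπ : √(2 * π) ^ 2 = 2 * π := sq_sqrt (by positivity)
  simp only [biGaussPdf, normalPdf, stdPdf]
  rw [hexp, exp_add]
  field_simp
  rw [hπ]

lemma integrable_normalPdf_mul_normalPdf_comp {m : ℝ → ℝ} (hm : Continuous m) {μ σ τ : ℝ}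
    (hσ : 0 < σ) (hτ : 0 < τ) :
    Integrable (fun p : ℝ × ℝ => normalPdf μ σ p.1 * normalPdf (m p.1) τ p.2) := by
  have hcont : Continuous fun p : ℝ × ℝ => normalPdf μ σ p.1 * normalPdf (m p.1) τ p.2 := by
    unfold normalPdf
    fun_prop
  rw [Measure.volume_eq_prod, integrable_prod_iff hcont.aestronglyMeasurable]
  refine ⟨ae_of_all _ fun x => (integrable_normalPdf hτ (m x)).const_mul (normalPdf μ σ x),
    (integrable_normalPdf hσ μ).congr (ae_of_all _ fun x => ?_)⟩
  simp only [norm_mul, norm_of_nonneg (normalPdf_nonneg hσ.le _ _),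
    norm_of_nonneg (normalPdf_nonneg hτ.le _ _)]
  rw [integral_const_mul, integral_normalPdf hτ, mul_one]

lemma integrable_biGaussPdf (hσ₁ : 0 < σ₁) (hD : σ₁₂ ^ 2 < σ₁ ^ 2 * σ₂ ^ 2) :
    Integrable (fun p : ℝ × ℝ => biGaussPdf μ₁ μ₂ σ₁ σ₂ σ₁₂ p.1 p.2) := by
  simp_rw [biGaussPdf_eq_normalPdf_mul_normalPdf hσ₁ hD]
  exact integrable_normalPdf_mul_normalPdf_comp (m := fun x => μ₂ + σ₁₂ / σ₁ ^ 2 * (x - μ₁))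
    (by fun_prop) hσ₁ (div_pos (sqrt_pos.2 (by linarith)) hσ₁)

lemma integral_stdCdf_mul_biGaussPdf_right (hσ₁ : 0 < σ₁) (hD : σ₁₂ ^ 2 < σ₁ ^ 2 * σ₂ ^ 2)
    (x : ℝ) :
    ∫ y, stdCdf y * biGaussPdf μ₁ μ₂ σ₁ σ₂ σ₁₂ x y =
      stdCdf ((σ₁ * μ₂ + σ₁₂ * ((x - μ₁) / σ₁)) / √(σ₁ ^ 2 * (1 + σ₂ ^ 2) - σ₁₂ ^ 2)) *
        normalPdf μ₁ σ₁ x := by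
  have hD' : 0 < σ₁ ^ 2 * σ₂ ^ 2 - σ₁₂ ^ 2 := by linarith
  have hτ : 0 < √(σ₁ ^ 2 * σ₂ ^ 2 - σ₁₂ ^ 2) / σ₁ := div_pos (sqrt_pos.2 hD') hσ₁
  have hsqrt : √(1 + (√(σ₁ ^ 2 * σ₂ ^ 2 - σ₁₂ ^ 2) / σ₁) ^ 2) =
      √(σ₁ ^ 2 * (1 + σ₂ ^ 2) - σ₁₂ ^ 2) / σ₁ := by
    have hK : 0 < σ₁ ^ 2 * (1 + σ₂ ^ 2) - σ₁₂ ^ 2 := by nlinarith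
    rw [sqrt_eq_iff_mul_self_eq_of_pos (div_pos (sqrt_pos.2 hK) hσ₁), div_mul_div_comm,
      mul_self_sqrt hK.le, div_pow, sq_sqrt hD'.le]
    field_simp
    ring
  simp_rw [biGaussPdf_eq_normalPdf_mul_normalPdf hσ₁ hD, mul_left_comm (stdCdf _)]
  rw [integral_const_mul, integral_stdCdf_mul_normalPdf hτ, hsqrt, mul_comm]
  congr 2
  field_simp

lemma setIntegral_Iic_prod_univ_stdCdf_mul_biGaussPdf (hσ₁ : 0 < σ₁)
    (hD : σ₁₂ ^ 2 < σ₁ ^ 2 * σ₂ ^ 2) (γ : ℝ) :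
    ∫ p : ℝ × ℝ in Iic γ ×ˢ univ, stdCdf p.2 * biGaussPdf μ₁ μ₂ σ₁ σ₂ σ₁₂ p.1 p.2 =
      ∫ t in Iic ((γ - μ₁) / σ₁),
        stdCdf ((σ₁ * μ₂ + σ₁₂ * t) / √(σ₁ ^ 2 * (1 + σ₂ ^ 2) - σ₁₂ ^ 2)) * stdPdf t := by
  rw [Measure.volume_eq_prod, setIntegral_prod _
    ((integrable_biGaussPdf hσ₁ hD).stdCdf_comp_mul measurable_snd).integrableOn,
    Measure.restrict_univ]
  simp_rw [integral_stdCdf_mul_biGaussPdf_right hσ₁ hD]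
  exact setIntegral_Iic_comp_div_mul_normalPdf
    (fun t => stdCdf ((σ₁ * μ₂ + σ₁₂ * t) / √(σ₁ ^ 2 * (1 + σ₂ ^ 2) - σ₁₂ ^ 2))) hσ₁ μ₁ γ

lemma integral_stdCdf_mul_biGaussPdf (hσ₁ : 0 < σ₁) (hD : σ₁₂ ^ 2 < σ₁ ^ 2 * σ₂ ^ 2) :
    ∫ p : ℝ × ℝ, stdCdf p.2 * biGaussPdf μ₁ μ₂ σ₁ σ₂ σ₁₂ p.1 p.2 =
      stdCdf (μ₂ / √(1 + σ₂ ^ 2)) := by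
  set κ := √(σ₁ ^ 2 * (1 + σ₂ ^ 2) - σ₁₂ ^ 2)
  have hκ2 : κ ^ 2 = σ₁ ^ 2 * (1 + σ₂ ^ 2) - σ₁₂ ^ 2 := sq_sqrt (by nlinarith)
  have hκ : 0 < κ := sqrt_pos.2 (by nlinarith)
  have hsqrt : √(1 + (σ₁₂ / κ) ^ 2) = σ₁ * √(1 + σ₂ ^ 2) / κ := by
    rw [sqrt_eq_iff_mul_self_eq_of_pos (by positivity), div_mul_div_comm, mul_mul_mul_comm,
      mul_self_sqrt (by positivity), div_pow]
    field_simp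
    rw [hκ2]
    ring
  rw [Measure.volume_eq_prod, integral_prod _
    ((integrable_biGaussPdf hσ₁ hD).stdCdf_comp_mul measurable_snd)]
  simp_rw [integral_stdCdf_mul_biGaussPdf_right hσ₁ hD]
  rw [integral_comp_div_mul_normalPdf (fun t => stdCdf ((σ₁ * μ₂ + σ₁₂ * t) / κ)) hσ₁]
  simp_rw [add_div, mul_div_right_comm σ₁₂, integral_stdCdf_add_mul_mul_stdPdf, hsqrt]
  congr 1
  field_simp

end Bivariate

lemma bvnPdf_eq_biGaussPdf (ρ x y : ℝ) : bvnPdf ρ x y = biGaussPdf 0 0 1 1 ρ x y := by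
  simp [bvnPdf, biGaussPdf]

lemma bvnPdf_comm (ρ x y : ℝ) : bvnPdf ρ x y = bvnPdf ρ y x := by
  unfold bvnPdf
  ring_nf

lemma bvn_comm (u v ρ : ℝ) : bvn u v ρ = bvn v u ρ := by
  rw [bvn, bvn, Measure.volume_eq_prod, ← setIntegral_prod_swap]
  simp_rw [Prod.fst_swap, Prod.snd_swap, bvnPdf_comm ρ]

lemma bvn_eq_setIntegral_stdCdf_mul_stdPdf {ρ : ℝ} (hρ : ρ ^ 2 < 1) (u v : ℝ) :
    bvn u v ρ = ∫ t in Iic u, stdCdf ((v - ρ * t) / √(1 - ρ ^ 2)) * stdPdf t := by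
  have hD : ρ ^ 2 < 1 ^ 2 * 1 ^ 2 := by simpa using hρ
  have hs : 0 < √(1 - ρ ^ 2) := sqrt_pos.2 (by linarith)
  simp_rw [bvn, bvnPdf_eq_biGaussPdf]
  rw [Measure.volume_eq_prod, setIntegral_prod _ (integrable_biGaussPdf one_pos hD).integrableOn]
  refine setIntegral_congr_fun measurableSet_Iic fun t _ => ?_
  simp_rw [biGaussPdf_eq_normalPdf_mul_normalPdf one_pos hD]
  rw [integral_const_mul]
  simp only [one_pow, mul_one, div_one, sub_zero, zero_add]
  rw [setIntegral_Iic_normalPdf hs, mul_comm]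
  simp [normalPdf]

theorem stmt_7_general (μq μs σq σs σqs γ : ℝ) (hq : 0 < σq)
    (hcov : σqs ^ 2 < σq ^ 2 * σs ^ 2) :
    (∫ p : ℝ × ℝ in Set.Iic γ ×ˢ Set.univ, stdCdf p.2 * biGaussPdf μq μs σq σs σqs p.1 p.2) /
        (∫ p : ℝ × ℝ, stdCdf p.2 * biGaussPdf μq μs σq σs σqs p.1 p.2) =
      bvn (μs / Real.sqrt (1 + σs ^ 2)) ((γ - μq) / σq)
          (-σqs / (σq * Real.sqrt (1 + σs ^ 2))) /
        stdCdf (μs / Real.sqrt (1 + σs ^ 2)) := by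
  have hc2 : √(1 + σs ^ 2) ^ 2 = 1 + σs ^ 2 := sq_sqrt (by positivity)
  have hK : 0 < σq ^ 2 * (1 + σs ^ 2) - σqs ^ 2 := by nlinarith
  have hρ : (-σqs / (σq * √(1 + σs ^ 2))) ^ 2 < 1 := by
    rw [div_pow, mul_pow, hc2, div_lt_one (by positivity)]
    linarith
  have hsqrt : √(1 - (-σqs / (σq * √(1 + σs ^ 2))) ^ 2) =
      √(σq ^ 2 * (1 + σs ^ 2) - σqs ^ 2) / (σq * √(1 + σs ^ 2)) := by
    rw [sqrt_eq_iff_mul_self_eq_of_pos (by positivity), div_mul_div_comm, mul_self_sqrt hK.le,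
      div_pow, mul_pow, hc2]
    field_simp
    rw [hc2]
  rw [setIntegral_Iic_prod_univ_stdCdf_mul_biGaussPdf hq hcov,
    integral_stdCdf_mul_biGaussPdf hq hcov, bvn_comm, bvn_eq_setIntegral_stdCdf_mul_stdPdf hρ]
  congr 1
  refine setIntegral_congr_fun measurableSet_Iic fun t _ => ?_
  rw [hsqrt]
  congr 2
  field_simp
  ring

theorem stmt_7 (μq μs σq σs σqs γ : ℝ) (hq : 0 < σq) (hs : 0 < σs)
    (hcov : σqs ^ 2 < σq ^ 2 * σs ^ 2) :
    (∫ p : ℝ × ℝ in Set.Iic γ ×ˢ Set.univ, stdCdf p.2 * biGaussPdf μq μs σq σs σqs p.1 p.2) /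
        (∫ p : ℝ × ℝ, stdCdf p.2 * biGaussPdf μq μs σq σs σqs p.1 p.2) =
      bvn (μs / Real.sqrt (1 + σs ^ 2)) ((γ - μq) / σq)
          (-σqs / (σq * Real.sqrt (1 + σs ^ 2))) /
        stdCdf (μs / Real.sqrt (1 + σs ^ 2)) :=
  stmt_7_general μq μs σq σs σqs γ hq hcov
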